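/- arXiv:2410.24060 — 2 statements merged into one kernel-verified Lean document; each statement's English description precedes it below -/
import Mathlib

section
/- Let d ≥ 1, let σ > 0, and let p be a probability measure on ℝ^d with mean μ and covariance Σ. Set W* = Σ(Σ + σ²I)⁻¹ and b* = (I − W*)μ. If a d×d real matrix W and b ∈ ℝ^d satisfy L(W, b) = L(W*, b*), then W = W* and b = b*; that is, the minimizer of the denoising score-matching objective over affine denoisers is unique. -/
open MeasureTheory ProbabilityTheory Matrix

/-- The isotropic Gaussian measure `N(0, σ²I)` on `ℝ^d` (with the Euclidean norm),
the product of `d` independent one-dimensional Gaussians of mean `0` and variance `σ²`. -/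
noncomputable def gaussVec (d : ℕ) (σ : ℝ) : Measure (EuclideanSpace ℝ (Fin d)) :=
  (Measure.pi fun _ : Fin d => gaussianReal 0 (Real.toNNReal (σ ^ 2))).map
    (MeasurableEquiv.toLp 2 (Fin d → ℝ))

/-- Reinterpret a plain vector as an element of Euclidean space. -/
def toE {d : ℕ} (v : Fin d → ℝ) : EuclideanSpace ℝ (Fin d) := WithLp.toLp 2 v

/-- The denoising score-matching loss `L(W, b)` of the affine denoiser `D(x) = Wx + b`:
`L(W, b) = ∫ ∫ ‖W(x+ε) + b − x‖² dN(0,σ²I)(ε) dp(x)`. -/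
noncomputable def dsmLoss (d : ℕ) (σ : ℝ) (p : Measure (EuclideanSpace ℝ (Fin d)))
    (W : Matrix (Fin d) (Fin d) ℝ) (b : EuclideanSpace ℝ (Fin d)) : ℝ :=
  ∫ x, ∫ ε, ‖toE (W.mulVec (x + ε)) + b - x‖ ^ 2 ∂(gaussVec d σ) ∂p

/-! The Gaussian noise has mean `0` and covariance `σ²I`, and `p` has mean `μ` and covariance `Σ`.
Coordinatewise, a second moment is the squared mean plus the variance, so any measure `ν` with
mean `m` and covariance matrix `C` satisfies `∫ ‖A y + c‖² dν = ‖A m + c‖² + tr (A C Aᵀ)`.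
Applying this to the noise and then to `p` gives
`L(W, b) = ‖(W - I) μ + b‖² + tr ((W - I) Σ (W - I)ᵀ) + σ² tr (W Wᵀ)`.
With `M = Σ + σ²I` and `W* M = Σ`, completing the square turns the last two terms into
`tr ((W - W*) M (W - W*)ᵀ) + tr ((I - W*) Σ)`. The first two terms are nonnegative and vanish at
`(W*, b*)`; since `M` is positive definite, they vanish only there. -/

open scoped RealInnerProductSpace

lemma integral_inner_add_const_sq {E : Type*} [NormedAddCommGroup E] [InnerProductSpace ℝ E]
    [CompleteSpace E] [MeasurableSpace E] [BorelSpace E]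
    {ν : Measure E} [IsProbabilityMeasure ν] (hν : MemLp id 2 ν) (a : E) (t : ℝ) :
    ∫ y, (⟪a, y⟫ + t) ^ 2 ∂ν = (⟪a, ∫ y, y ∂ν⟫ + t) ^ 2 + covarianceBilin ν a a := by
  have hint : Integrable (fun y : E => y) ν := hν.integrable one_le_two
  have hmean : ∫ y, (⟪a, y⟫ + t) ∂ν = ⟪a, ∫ y, y ∂ν⟫ + t := by
    rw [integral_add (hint.const_inner a) (integrable_const t), integral_inner hint,
      integral_const, probReal_univ, one_smul]
  have hL2 : MemLp (fun y => ⟪a, y⟫ + t) 2 ν :=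
    ((innerSL ℝ a).comp_memLp' hν).add (memLp_const t)
  have hvar := variance_eq_sub hL2
  rw [variance_add_const (by fun_prop), ← covarianceBilin_self hν, hmean] at hvar
  simp only [Pi.pow_apply] at hvar
  linarith

lemma Matrix.mul_mul_transpose_apply_self {ι κ : Type*} [Fintype ι] (A : Matrix κ ι ℝ)
    (C : Matrix ι ι ℝ) (i : κ) :
    (A * C * Aᵀ) i i = A i ⬝ᵥ C *ᵥ A i := by
  simp only [mul_apply, transpose_apply, dotProduct, mulVec, Finset.sum_mul, Finset.mul_sum]
  rw [Finset.sum_comm]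
  exact Finset.sum_congr rfl fun j _ => Finset.sum_congr rfl fun k _ => by ring

lemma toLp_mulVec_add_apply {ι κ : Type*} [Fintype ι] (A : Matrix κ ι ℝ)
    (c : EuclideanSpace ℝ κ) (y : EuclideanSpace ℝ ι) (i : κ) :
    (WithLp.toLp 2 (A *ᵥ y) + c) i = ⟪WithLp.toLp 2 (A i), y⟫ + c i := by
  simp [EuclideanSpace.inner_eq_star_dotProduct, mulVec, dotProduct_comm]

section Moments

variable {ι : Type*} [Fintype ι] {ν : Measure (EuclideanSpace ℝ ι)} [IsProbabilityMeasure ν]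

lemma memLp_toLp_mulVec_add {κ : Type*} [Fintype κ] (hν : MemLp id 2 ν) (A : Matrix κ ι ℝ)
    (c : EuclideanSpace ℝ κ) :
    MemLp (fun y : EuclideanSpace ℝ ι => WithLp.toLp 2 (A *ᵥ y) + c) 2 ν := by
  refine MemLp.of_eval_piLp fun i => ?_
  simp only [toLp_mulVec_add_apply]
  exact ((innerSL ℝ _).comp_memLp' hν).add (memLp_const _)

lemma integral_norm_sq_toLp_mulVec_add {κ : Type*} [Fintype κ] (hν : MemLp id 2 ν)
    {m : EuclideanSpace ℝ ι} (hm : ∫ y, y ∂ν = m)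
    {C : Matrix ι ι ℝ} (hC : ∀ u v, covarianceBilin ν u v = u ⬝ᵥ C *ᵥ v)
    (A : Matrix κ ι ℝ) (c : EuclideanSpace ℝ κ) :
    ∫ y, ‖WithLp.toLp 2 (A *ᵥ y) + c‖ ^ 2 ∂ν
      = ‖WithLp.toLp 2 (A *ᵥ m) + c‖ ^ 2 + trace (A * C * Aᵀ) := by
  have hL2 := (memLp_toLp_mulVec_add hν A c).eval_piLp
  simp only [toLp_mulVec_add_apply] at hL2
  simp_rw [EuclideanSpace.real_norm_sq_eq, toLp_mulVec_add_apply]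
  rw [integral_finsetSum _ fun i _ => (hL2 i).integrable_sq]
  simp_rw [integral_inner_add_const_sq hν, hm, hC, Finset.sum_add_distrib, trace, diag_apply,
    mul_mul_transpose_apply_self]

lemma covarianceBilin_eq_dotProduct_mulVec (hν : MemLp id 2 ν)
    {m : EuclideanSpace ℝ ι} (hm : ∫ y, y ∂ν = m)
    {C : Matrix ι ι ℝ} (hC : ∀ i j, ∫ y, (y i - m i) * (y j - m j) ∂ν = C i j)
    (u v : EuclideanSpace ℝ ι) :
    covarianceBilin ν u v = u ⬝ᵥ C *ᵥ v := by
  have hL2 : ∀ i, MemLp (fun y : EuclideanSpace ℝ ι => y i) 2 ν := hν.eval_piLp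
  have hcoord : ∀ i, ∫ y, y i ∂ν = m i := fun i => by
    rw [← hm, eval_integral_piLp fun j => (hL2 j).integrable one_le_two]
  have hcov : ∀ i j, cov[fun y => y i, fun y => y j; ν] = C i j := fun i j => by
    rw [covariance, hcoord, hcoord, hC]
  have hpi := covarianceBilin_apply_pi hL2 u v
  simp only [WithLp.toLp_ofLp, Measure.map_id'] at hpi
  rw [hpi]
  simp only [hcov, dotProduct, mulVec, Finset.mul_sum]
  exact Finset.sum_congr rfl fun i _ => Finset.sum_congr rfl fun j _ => by ring

end Moments

lemma posSemidef_of_covarianceBilin_eq {ι : Type*} [Fintype ι]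
    {ν : Measure (EuclideanSpace ℝ ι)} {C : Matrix ι ι ℝ}
    (hC : ∀ u v, covarianceBilin ν u v = u ⬝ᵥ C *ᵥ v) : C.PosSemidef := by
  classical
  refine PosSemidef.of_dotProduct_mulVec_nonneg ?_ fun x => ?_
  · ext i j
    have hji := hC (EuclideanSpace.single j 1) (EuclideanSpace.single i 1)
    rw [covarianceBilin_comm, hC] at hji
    simpa using hji.symm
  · have hxx := covarianceBilin_self_nonneg (μ := ν) (WithLp.toLp 2 x)
    rwa [hC] at hxx

lemma trace_sub_one_mul_mul_transpose_add_eq {n : Type*} [Fintype n] [DecidableEq n] (σ : ℝ)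
    {S W₀ : Matrix n n ℝ} (hS : S.IsSymm) (hW₀ : W₀ * (S + σ ^ 2 • 1) = S)
    (W : Matrix n n ℝ) :
    trace ((W - 1) * S * (W - 1)ᵀ) + σ ^ 2 * trace (W * Wᵀ)
      = trace ((W - W₀) * (S + σ ^ 2 • 1) * (W - W₀)ᵀ) + trace ((1 - W₀) * S) := by
  set M := S + σ ^ 2 • 1
  have hMW₀ : M * W₀ᵀ = S := by
    rw [show M = Mᵀ by simp [M, hS.eq], ← transpose_mul, hW₀, hS.eq]
  have htrace_comm : ∀ A : Matrix n n ℝ, trace (S * Aᵀ) = trace (A * S) := fun A => by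
    rw [← trace_transpose, transpose_mul, transpose_transpose, hS.eq]
  have hexpand : (W - W₀) * M * (W - W₀)ᵀ
      = W * M * Wᵀ - W * (M * W₀ᵀ) - W₀ * M * Wᵀ + W₀ * M * W₀ᵀ := by
    rw [transpose_sub]
    noncomm_ring
  have hWMW : W * M * Wᵀ = W * S * Wᵀ + σ ^ 2 • (W * Wᵀ) := by
    simp only [M, Matrix.mul_add, Matrix.add_mul, Matrix.mul_smul, Matrix.smul_mul, Matrix.mul_one]
  have hexpand_one : (W - 1) * S * (W - 1)ᵀ = W * S * Wᵀ - W * S - S * Wᵀ + S := by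
    rw [transpose_sub, transpose_one]
    noncomm_ring
  rw [hexpand, hMW₀, hW₀, hWMW, hexpand_one]
  simp only [trace_add, trace_sub, trace_smul, smul_eq_mul, sub_mul, one_mul, htrace_comm]
  ring

section Trace

variable {m n : Type*} [Fintype m] [Fintype n] {M : Matrix n n ℝ}

lemma Matrix.PosSemidef.trace_mul_mul_transpose_nonneg (hM : M.PosSemidef) (B : Matrix m n ℝ) :
    0 ≤ trace (B * M * Bᵀ) :=
  Finset.sum_nonneg fun i _ => by
    simpa [mul_mul_transpose_apply_self] using hM.dotProduct_mulVec_nonneg (B i)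

lemma Matrix.PosDef.trace_mul_mul_transpose_eq_zero_iff (hM : M.PosDef) {B : Matrix m n ℝ} :
    trace (B * M * Bᵀ) = 0 ↔ B = 0 := by
  refine ⟨fun h => ?_, fun h => by simp [h]⟩
  rw [trace, Finset.sum_eq_zero_iff_of_nonneg fun i _ => by
    simpa [mul_mul_transpose_apply_self] using hM.posSemidef.dotProduct_mulVec_nonneg (B i)] at h
  ext i j
  by_contra hB
  have hpos := hM.dotProduct_mulVec_pos (x := B i) fun h => hB (by simp [h])
  simp_all [mul_mul_transpose_apply_self]

end Trace

lemma gaussVec_eq_multivariateGaussian (d : ℕ) (σ : ℝ) :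
    gaussVec d σ = multivariateGaussian 0 (σ ^ 2 • 1) := by
  have : IsProbabilityMeasure (gaussVec d σ) := Measure.isProbabilityMeasure_map (by fun_prop)
  refine Measure.ext_of_charFun (funext fun t => ?_)
  rw [charFun_multivariateGaussian (PosSemidef.one.smul (sq_nonneg σ))]
  simp_rw [gaussVec, MeasurableEquiv.coe_toLp, charFun_pi, charFun_gaussianReal,
    ← Complex.exp_sum]
  simp [Finset.sum_div, dotProduct, mulVec, one_apply, sq_nonneg,
    mul_left_comm _ ((σ : ℂ) ^ 2), ← sq]

lemma integral_gaussVec_norm_sq {d : ℕ} (σ : ℝ) (W : Matrix (Fin d) (Fin d) ℝ)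
    (c : EuclideanSpace ℝ (Fin d)) :
    ∫ ε, ‖WithLp.toLp 2 (W *ᵥ ε) + c‖ ^ 2 ∂(gaussVec d σ) = ‖c‖ ^ 2 + σ ^ 2 * trace (W * Wᵀ) := by
  have hcov : (σ ^ 2 • 1 : Matrix (Fin d) (Fin d) ℝ).PosSemidef :=
    PosSemidef.one.smul (sq_nonneg σ)
  rw [gaussVec_eq_multivariateGaussian, integral_norm_sq_toLp_mulVec_add IsGaussian.memLp_two_id
    integral_id_multivariateGaussian (covarianceBilin_multivariateGaussian hcov)]
  simp

lemma dsmLoss_eq {d : ℕ} (σ : ℝ) {p : Measure (EuclideanSpace ℝ (Fin d))}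
    [IsProbabilityMeasure p] (hp : MemLp id 2 p) {μ : EuclideanSpace ℝ (Fin d)}
    (hμ : ∫ x, x ∂p = μ) {S : Matrix (Fin d) (Fin d) ℝ}
    (hS : ∀ u v, covarianceBilin p u v = u ⬝ᵥ S *ᵥ v)
    (W : Matrix (Fin d) (Fin d) ℝ) (b : EuclideanSpace ℝ (Fin d)) :
    dsmLoss d σ p W b = ‖b - toE ((1 - W) *ᵥ μ)‖ ^ 2 + trace ((W - 1) * S * (W - 1)ᵀ)
      + σ ^ 2 * trace (W * Wᵀ) := by
  have hsplit : ∀ x ε : EuclideanSpace ℝ (Fin d), toE (W *ᵥ (x + ε)) + b - x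
      = WithLp.toLp 2 (W *ᵥ ε) + (WithLp.toLp 2 ((W - 1) *ᵥ x) + b) := fun x ε => by
    ext i
    simp only [toE, mulVec_add, sub_mulVec, one_mulVec, WithLp.toLp_add, WithLp.toLp_sub,
      WithLp.toLp_ofLp, PiLp.add_apply, PiLp.sub_apply]
    ring
  simp_rw [dsmLoss, hsplit, integral_gaussVec_norm_sq]
  rw [integral_add ((memLp_toLp_mulVec_add hp _ b).integrable_norm_pow' (p := 2))
    (integrable_const _), integral_norm_sq_toLp_mulVec_add hp hμ hS, integral_const]
  have hbias : WithLp.toLp 2 ((W - 1) *ᵥ μ) + b = b - toE ((1 - W) *ᵥ μ) := by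
    ext i
    simp only [toE, sub_mulVec, one_mulVec, WithLp.toLp_sub, WithLp.toLp_ofLp, PiLp.add_apply,
      PiLp.sub_apply]
    ring
  simp [hbias]

lemma dsmLoss_eq_of_mul_eq {d : ℕ} (σ : ℝ) {p : Measure (EuclideanSpace ℝ (Fin d))}
    [IsProbabilityMeasure p] (hp : MemLp id 2 p) {μ : EuclideanSpace ℝ (Fin d)}
    (hμ : ∫ x, x ∂p = μ) {S : Matrix (Fin d) (Fin d) ℝ}
    (hS : ∀ u v, covarianceBilin p u v = u ⬝ᵥ S *ᵥ v) {W₀ : Matrix (Fin d) (Fin d) ℝ}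
    (hW₀ : W₀ * (S + σ ^ 2 • 1) = S) (W : Matrix (Fin d) (Fin d) ℝ)
    (b : EuclideanSpace ℝ (Fin d)) :
    dsmLoss d σ p W b = ‖b - toE ((1 - W) *ᵥ μ)‖ ^ 2
      + trace ((W - W₀) * (S + σ ^ 2 • 1) * (W - W₀)ᵀ) + trace ((1 - W₀) * S) := by
  have hSsymm : S.IsSymm := isHermitian_iff_isSymm.1 (posSemidef_of_covarianceBilin_eq hS).1
  rw [dsmLoss_eq σ hp hμ hS, add_assoc, add_assoc,
    trace_sub_one_mul_mul_transpose_add_eq σ hSsymm hW₀]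

theorem gaussian_denoiser_unique_minimizer_general
    (d : ℕ) (σ : ℝ) (hσ : 0 < σ)
    (p : Measure (EuclideanSpace ℝ (Fin d))) [IsProbabilityMeasure p]
    (μ : EuclideanSpace ℝ (Fin d)) (S : Matrix (Fin d) (Fin d) ℝ)
    (hp2 : MemLp id 2 p)
    (hmean : ∫ x, x ∂p = μ)
    (hcov : ∀ i j, ∫ x, (x i - μ i) * (x j - μ j) ∂p = S i j)
    (W : Matrix (Fin d) (Fin d) ℝ) (b : EuclideanSpace ℝ (Fin d))
    (heq : dsmLoss d σ p W b =
      dsmLoss d σ p (S * (S + σ ^ 2 • 1)⁻¹)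
        (toE ((1 - S * (S + σ ^ 2 • 1)⁻¹).mulVec μ))) :
    W = S * (S + σ ^ 2 • 1)⁻¹ ∧ b = toE ((1 - S * (S + σ ^ 2 • 1)⁻¹).mulVec μ) := by
  have hS := covarianceBilin_eq_dotProduct_mulVec hp2 hmean hcov
  have hM : (S + σ ^ 2 • 1).PosDef :=
    PosDef.posSemidef_add (posSemidef_of_covarianceBilin_eq hS) (PosDef.one.smul (by positivity))
  set W₀ := S * (S + σ ^ 2 • 1)⁻¹
  have hW₀ : W₀ * (S + σ ^ 2 • 1) = S := by
    rw [Matrix.mul_assoc, nonsing_inv_mul _ ((isUnit_iff_isUnit_det _).1 hM.isUnit),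
      Matrix.mul_one]
  have hloss := dsmLoss_eq_of_mul_eq σ hp2 hmean hS hW₀
  rw [hloss, hloss, sub_self, sub_self] at heq
  simp only [norm_zero, zero_mul, transpose_zero, trace_zero, ne_eq, OfNat.ofNat_ne_zero,
    not_false_eq_true, zero_pow, add_zero, zero_add] at heq
  have hbias_nonneg := sq_nonneg ‖b - toE ((1 - W) *ᵥ μ)‖
  have htrace_nonneg := hM.posSemidef.trace_mul_mul_transpose_nonneg (W - W₀)
  have hW : W = W₀ := sub_eq_zero.1 <| hM.trace_mul_mul_transpose_eq_zero_iff.1 <| by linarith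
  subst hW
  exact ⟨rfl, sub_eq_zero.1 <| norm_eq_zero.1 <| (pow_eq_zero_iff two_ne_zero).1 <| by linarith⟩

/-- The minimizer of the denoising score-matching objective over affine
denoisers is unique: if `L(W, b) = L(W*, b*)` with `W* = Σ(Σ + σ²I)⁻¹`, `b* = (I − W*)μ`,
then `W = W*` and `b = b*`. -/
theorem gaussian_denoiser_unique_minimizer
    (d : ℕ) (hd : 1 ≤ d) (σ : ℝ) (hσ : 0 < σ)
    (p : Measure (EuclideanSpace ℝ (Fin d))) [IsProbabilityMeasure p]
    (μ : EuclideanSpace ℝ (Fin d)) (S : Matrix (Fin d) (Fin d) ℝ)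
    (hp2 : MemLp id 2 p)
    (hmean : ∫ x, x ∂p = μ)
    (hcov : ∀ i j, ∫ x, (x i - μ i) * (x j - μ j) ∂p = S i j)
    (W : Matrix (Fin d) (Fin d) ℝ) (b : EuclideanSpace ℝ (Fin d))
    (heq : dsmLoss d σ p W b =
      dsmLoss d σ p (S * (S + σ ^ 2 • 1)⁻¹)
        (toE ((1 - S * (S + σ ^ 2 • 1)⁻¹).mulVec μ))) :
    W = S * (S + σ ^ 2 • 1)⁻¹ ∧ b = toE ((1 - S * (S + σ ^ 2 • 1)⁻¹).mulVec μ) :=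
  gaussian_denoiser_unique_minimizer_general d σ hσ p μ S hp2 hmean hcov W b heq
end

section
/- Let y₁, …, y_N ∈ ℝ^d be finitely many points, let σ > 0, and define the multi-delta optimal denoiser D_M(z) = (∑_{i=1}^N exp(−‖z − yᵢ‖²/(2σ²)) yᵢ) / (∑_{i=1}^N exp(−‖z − yᵢ‖²/(2σ²))). Let x be uniformly distributed on {y₁, …, y_N} and ε ~ N(0, σ²I) independent of x. Then for every Borel measurable function f : ℝ^d → ℝ^d such that (x, ε) ↦ ‖f(x + ε) − x‖² is integrable, (1/N)∑_{i=1}^N ∫ ‖D_M(yᵢ + ε) − yᵢ‖² dN(0,σ²I)(ε) ≤ (1/N)∑_{i=1}^N ∫ ‖f(yᵢ + ε) − yᵢ‖² dN(0,σ²I)(ε); that is, D_M minimizes the denoising mean-squared error over all measurable denoisers for the multi-delta data distribution. -/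
open MeasureTheory ProbabilityTheory Matrix

/-- The multi-delta optimal denoiser: the softmax-weighted convex combination
`D_M(z) = (∑ exp(−‖z − yᵢ‖²/(2σ²)) yᵢ) / (∑ exp(−‖z − yᵢ‖²/(2σ²)))`. -/
noncomputable def multiDeltaDenoiser {d N : ℕ} (y : Fin N → EuclideanSpace ℝ (Fin d))
    (σ : ℝ) (z : EuclideanSpace ℝ (Fin d)) : EuclideanSpace ℝ (Fin d) :=
  (∑ i, Real.exp (-‖z - y i‖ ^ 2 / (2 * σ ^ 2)))⁻¹ •
    ∑ i, Real.exp (-‖z - y i‖ ^ 2 / (2 * σ ^ 2)) • y i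

/-! Under `N(0, σ²I)` the law of `yᵢ + ε` has Lebesgue density `z ↦ p (z - yᵢ)`, with `p` the
Gaussian density, so the mean-squared error of a denoiser `f` is
`(1/N) ∫ ∑ᵢ p (z - yᵢ) ‖f z - yᵢ‖² dz`. For fixed `z` the integrand is a weighted sum of squared
distances to the `yᵢ`, minimized by their weighted mean; since `p (z - yᵢ)` is proportional to
`exp (-‖z - yᵢ‖² / (2σ²))`, that weighted mean is `D_M(z)`. -/

open scoped ENNReal NNReal RealInnerProductSpace

theorem MeasurableEquiv.map_withDensity_comp {α β : Type*} [MeasurableSpace α]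
    [MeasurableSpace β] (e : α ≃ᵐ β) (μ : Measure α) {g : β → ℝ≥0∞} (hg : Measurable g) :
    (μ.withDensity (g ∘ e)).map e = (μ.map e).withDensity g := by
  ext s hs
  rw [e.map_apply, withDensity_apply _ hs, withDensity_apply _ (hs.preimage e.measurable),
    setLIntegral_map hs hg e.measurable, Function.comp_def]

namespace MeasureTheory

theorem lintegral_fin_nat_prod_eq_prod {n : ℕ} {E : Type*} [MeasurableSpace E]
    {μ : Fin n → Measure E} [∀ i, SigmaFinite (μ i)] {f : Fin n → E → ℝ≥0∞}
    (hf : ∀ i, Measurable (f i)) :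
    ∫⁻ x : Fin n → E, ∏ i, f i (x i) ∂(Measure.pi μ) = ∏ i, ∫⁻ x, f i x ∂(μ i) := by
  induction n with
  | zero => simp
  | succ n ih =>
    calc
      _ = ∫⁻ x : E × (Fin n → E), f 0 x.1 * ∏ i : Fin n, f i.succ (x.2 i)
            ∂((μ 0).prod (Measure.pi fun i ↦ μ i.succ)) := by
        rw [← ((measurePreserving_piFinSuccAbove μ 0).symm).lintegral_comp_emb
          (MeasurableEquiv.measurableEmbedding _)]
        simp_rw [MeasurableEquiv.piFinSuccAbove_symm_apply, Fin.insertNthEquiv,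
          Fin.prod_univ_succ, Fin.insertNth_zero, Equiv.coe_fn_mk, Fin.cons_succ,
          Fin.zero_succAbove, cast_eq, Fin.cons_zero]
      _ = (∫⁻ x, f 0 x ∂μ 0) * ∏ i : Fin n, ∫⁻ x, f i.succ x ∂(μ i.succ) := by
        rw [lintegral_prod_mul (g := fun x : Fin n → E ↦ ∏ i, f i.succ (x i))
          (hf 0).aemeasurable
          (Finset.measurable_prod _ fun i _ ↦ (hf i.succ).comp
            (measurable_pi_apply i)).aemeasurable,
          ih fun i ↦ hf i.succ]
      _ = _ := by rw [Fin.prod_univ_succ]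

theorem Measure.pi_fin_withDensity {n : ℕ} {E : Type*} [MeasurableSpace E]
    {μ : Fin n → Measure E} [∀ i, SigmaFinite (μ i)] {f : Fin n → E → ℝ≥0∞}
    (hf : ∀ i, Measurable (f i)) [∀ i, SigmaFinite ((μ i).withDensity (f i))] :
    Measure.pi (fun i ↦ (μ i).withDensity (f i)) =
      (Measure.pi μ).withDensity fun x ↦ ∏ i, f i (x i) := by
  refine Measure.pi_eq fun s hs ↦ ?_
  rw [withDensity_apply _ (.univ_pi hs), Measure.restrict_pi_pi,
    lintegral_fin_nat_prod_eq_prod hf]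
  simp_rw [withDensity_apply _ (hs _)]

section Translation

variable {G : Type*} [MeasurableSpace G] [AddCommGroup G] [MeasurableAdd G] {ν : Measure G}
  [ν.IsAddLeftInvariant] {g : G → ℝ}

theorem integral_comp_add_left_withDensity_ofReal (hg : Measurable g) (hg₀ : ∀ x, 0 ≤ g x)
    (c : G) (F : G → ℝ) :
    ∫ ε, F (c + ε) ∂ν.withDensity (fun x ↦ ENNReal.ofReal (g x)) = ∫ z, g (z - c) * F z ∂ν := by
  rw [integral_withDensity_eq_integral_toReal_smul hg.ennreal_ofReal
    (ae_of_all _ fun _ ↦ ENNReal.ofReal_lt_top),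
    ← integral_add_left_eq_self (fun z ↦ g (z - c) * F z) c]
  simp only [ENNReal.toReal_ofReal (hg₀ _), smul_eq_mul, add_sub_cancel_left]

theorem integrable_comp_add_left_withDensity_ofReal_iff (hg : Measurable g) (hg₀ : ∀ x, 0 ≤ g x)
    (c : G) (F : G → ℝ) :
    Integrable (fun ε ↦ F (c + ε)) (ν.withDensity (fun x ↦ ENNReal.ofReal (g x))) ↔
      Integrable (fun z ↦ g (z - c) * F z) ν := by
  rw [integrable_withDensity_iff_integrable_smul' hg.ennreal_ofReal
    (ae_of_all _ fun _ ↦ ENNReal.ofReal_lt_top),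
    ← (measurePreserving_add_left ν c).integrable_comp_emb
    (MeasurableEquiv.addLeft c).measurableEmbedding (g := fun z ↦ g (z - c) * F z)]
  simp only [Function.comp_def, ENNReal.toReal_ofReal (hg₀ _), smul_eq_mul, add_sub_cancel_left]

end Translation

end MeasureTheory

namespace Finset

variable {ι E : Type*} [NormedAddCommGroup E] [InnerProductSpace ℝ E] (t : Finset ι)
  (w : ι → ℝ) (y : ι → E)

theorem sum_mul_norm_sub_sq_eq_sum_mul_norm_centerMass_sub_sq_add (hw : ∑ i ∈ t, w i ≠ 0)
    (a : E) :
    ∑ i ∈ t, w i * ‖a - y i‖ ^ 2 =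
      ∑ i ∈ t, w i * ‖t.centerMass w y - y i‖ ^ 2 +
        (∑ i ∈ t, w i) * ‖a - t.centerMass w y‖ ^ 2 := by
  set m := t.centerMass w y
  have hm : ∑ i ∈ t, w i • (m - y i) = 0 := by
    simp only [smul_sub, sum_sub_distrib, ← sum_smul, m, centerMass, smul_inv_smul₀ hw, sub_self]
  calc ∑ i ∈ t, w i * ‖a - y i‖ ^ 2
      = ∑ i ∈ t, (w i * ‖m - y i‖ ^ 2 + w i * ‖a - m‖ ^ 2 + 2 * ⟪a - m, w i • (m - y i)⟫) := by
        refine sum_congr rfl fun i _ ↦ ?_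
        rw [← sub_add_sub_cancel a m (y i), norm_add_sq_real, real_inner_smul_right]
        ring
    _ = _ := by
        rw [sum_add_distrib, sum_add_distrib, ← mul_sum, ← inner_sum, hm, inner_zero_right,
          mul_zero, add_zero, ← sum_mul]

theorem sum_mul_norm_centerMass_sub_sq_le (hw : ∀ i ∈ t, 0 ≤ w i) (a : E) :
    ∑ i ∈ t, w i * ‖t.centerMass w y - y i‖ ^ 2 ≤ ∑ i ∈ t, w i * ‖a - y i‖ ^ 2 := by
  rcases (sum_nonneg hw).eq_or_lt with hzero | hpos
  · have hw₀ := (sum_eq_zero_iff_of_nonneg hw).mp hzero.symm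
    have hvanish (v : E) : ∑ i ∈ t, w i * ‖v - y i‖ ^ 2 = 0 :=
      sum_eq_zero fun i hi ↦ by rw [hw₀ i hi, zero_mul]
    rw [hvanish, hvanish]
  · rw [sum_mul_norm_sub_sq_eq_sum_mul_norm_centerMass_sub_sq_add t w y hpos.ne' a]
    exact le_add_of_nonneg_right (by positivity)

theorem norm_centerMass_le_sum_norm (hw : ∀ i ∈ t, 0 ≤ w i) :
    ‖t.centerMass w y‖ ≤ ∑ i ∈ t, ‖y i‖ := by
  rcases (sum_nonneg hw).eq_or_lt with hzero | hpos
  · simpa [centerMass, ← hzero] using sum_nonneg fun i _ ↦ norm_nonneg (y i)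
  · have hball : ∀ i ∈ t, y i ∈ Metric.closedBall 0 (∑ j ∈ t, ‖y j‖) := fun i hi ↦
      mem_closedBall_zero_iff.mpr (single_le_sum (fun j _ ↦ norm_nonneg (y j)) hi)
    exact mem_closedBall_zero_iff.mp ((convex_closedBall _ _).centerMass_mem hw hpos hball)

end Finset

open Real

noncomputable def gaussVecPDF (d : ℕ) (σ : ℝ) (z : EuclideanSpace ℝ (Fin d)) : ℝ :=
  (√(2 * π * σ ^ 2))⁻¹ ^ d * exp (-‖z‖ ^ 2 / (2 * σ ^ 2))

theorem measurable_gaussVecPDF (d : ℕ) (σ : ℝ) : Measurable (gaussVecPDF d σ) := by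
  unfold gaussVecPDF; fun_prop

theorem gaussVecPDF_nonneg (d : ℕ) (σ : ℝ) (z : EuclideanSpace ℝ (Fin d)) :
    0 ≤ gaussVecPDF d σ z := by
  unfold gaussVecPDF; positivity

theorem prod_gaussianPDFReal_eq_gaussVecPDF (d : ℕ) (σ : ℝ) (z : EuclideanSpace ℝ (Fin d)) :
    ∏ i, gaussianPDFReal 0 (σ ^ 2).toNNReal (z i) = gaussVecPDF d σ z := by
  have hv : ((σ ^ 2).toNNReal : ℝ) = σ ^ 2 := Real.coe_toNNReal _ (sq_nonneg σ)
  simp only [gaussianPDFReal, hv, sub_zero, Finset.prod_mul_distrib, Finset.prod_const,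
    Finset.card_univ, Fintype.card_fin, ← exp_sum, gaussVecPDF, EuclideanSpace.norm_sq_eq,
    Real.norm_eq_abs, sq_abs, Finset.sum_div, Finset.sum_neg_distrib, neg_div]

theorem gaussVec_eq_withDensity (d : ℕ) {σ : ℝ} (hσ : σ ≠ 0) :
    gaussVec d σ = volume.withDensity fun z ↦ ENNReal.ofReal (gaussVecPDF d σ z) := by
  have hv : (σ ^ 2).toNNReal ≠ 0 := by simpa using hσ
  have hdensity : (fun x : Fin d → ℝ ↦ ∏ i, gaussianPDF 0 (σ ^ 2).toNNReal (x i)) =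
      (fun z ↦ ENNReal.ofReal (gaussVecPDF d σ z)) ∘ MeasurableEquiv.toLp 2 (Fin d → ℝ) := by
    funext x
    simp only [gaussianPDF, Function.comp_apply, ← prod_gaussianPDFReal_eq_gaussVecPDF,
      ENNReal.ofReal_prod_of_nonneg fun i _ ↦ gaussianPDFReal_nonneg _ _ _]
    rfl
  have : SigmaFinite (volume.withDensity (gaussianPDF 0 (σ ^ 2).toNNReal)) := by
    rw [← gaussianReal_of_var_ne_zero 0 hv]
    infer_instance
  rw [gaussVec, gaussianReal_of_var_ne_zero 0 hv,
    Measure.pi_fin_withDensity fun _ ↦ measurable_gaussianPDF 0 _, hdensity,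
    MeasurableEquiv.map_withDensity_comp _ _ (measurable_gaussVecPDF d σ).ennreal_ofReal,
    ← volume_pi]
  congr 1
  exact (PiLp.volume_preserving_toLp (Fin d)).map_eq

instance (d : ℕ) (σ : ℝ) : IsProbabilityMeasure (gaussVec d σ) :=
  Measure.isProbabilityMeasure_map (by fun_prop)

theorem multiDeltaDenoiser_eq_centerMass {d N : ℕ} (y : Fin N → EuclideanSpace ℝ (Fin d))
    (σ : ℝ) (z : EuclideanSpace ℝ (Fin d)) :
    multiDeltaDenoiser y σ z =
      Finset.univ.centerMass (fun i ↦ exp (-‖z - y i‖ ^ 2 / (2 * σ ^ 2))) y :=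
  rfl

@[fun_prop]
theorem measurable_multiDeltaDenoiser {d N : ℕ} (y : Fin N → EuclideanSpace ℝ (Fin d))
    (σ : ℝ) : Measurable (multiDeltaDenoiser y σ) := by
  unfold multiDeltaDenoiser; fun_prop

theorem norm_multiDeltaDenoiser_le {d N : ℕ} (y : Fin N → EuclideanSpace ℝ (Fin d))
    (σ : ℝ) (z : EuclideanSpace ℝ (Fin d)) : ‖multiDeltaDenoiser y σ z‖ ≤ ∑ i, ‖y i‖ := by
  rw [multiDeltaDenoiser_eq_centerMass]
  exact Finset.norm_centerMass_le_sum_norm _ _ _ fun _ _ ↦ (exp_pos _).le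

theorem integrable_norm_multiDeltaDenoiser_add_sub_sq {d N : ℕ}
    (y : Fin N → EuclideanSpace ℝ (Fin d)) (σ : ℝ) (μ : Measure (EuclideanSpace ℝ (Fin d)))
    [IsFiniteMeasure μ] (c : EuclideanSpace ℝ (Fin d)) :
    Integrable (fun ε ↦ ‖multiDeltaDenoiser y σ (c + ε) - c‖ ^ 2) μ := by
  refine .of_bound (Measurable.aestronglyMeasurable (by fun_prop)) ((∑ i, ‖y i‖ + ‖c‖) ^ 2)
    (ae_of_all _ fun ε ↦ ?_)
  rw [norm_pow, norm_norm]
  gcongr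
  exact (norm_sub_le _ _).trans (by gcongr; exact norm_multiDeltaDenoiser_le y σ _)

theorem sum_gaussVecPDF_mul_norm_multiDeltaDenoiser_sub_sq_le {d N : ℕ}
    (y : Fin N → EuclideanSpace ℝ (Fin d)) (σ : ℝ) (z a : EuclideanSpace ℝ (Fin d)) :
    ∑ i, gaussVecPDF d σ (z - y i) * ‖multiDeltaDenoiser y σ z - y i‖ ^ 2 ≤
      ∑ i, gaussVecPDF d σ (z - y i) * ‖a - y i‖ ^ 2 := by
  rw [multiDeltaDenoiser_eq_centerMass]
  simp only [gaussVecPDF, mul_assoc, ← Finset.mul_sum]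
  exact mul_le_mul_of_nonneg_left
    (Finset.sum_mul_norm_centerMass_sub_sq_le _ _ _ (fun _ _ ↦ (exp_pos _).le) a) (by positivity)

section Shift

variable {d : ℕ} {σ : ℝ}

theorem integral_gaussVec_add (hσ : σ ≠ 0) (c : EuclideanSpace ℝ (Fin d))
    (F : EuclideanSpace ℝ (Fin d) → ℝ) :
    ∫ ε, F (c + ε) ∂gaussVec d σ = ∫ z, gaussVecPDF d σ (z - c) * F z := by
  rw [gaussVec_eq_withDensity d hσ, integral_comp_add_left_withDensity_ofReal
    (measurable_gaussVecPDF d σ) (gaussVecPDF_nonneg d σ)]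

theorem integrable_gaussVecPDF_sub_mul (hσ : σ ≠ 0) {c : EuclideanSpace ℝ (Fin d)}
    {F : EuclideanSpace ℝ (Fin d) → ℝ} (hF : Integrable (fun ε ↦ F (c + ε)) (gaussVec d σ)) :
    Integrable (fun z ↦ gaussVecPDF d σ (z - c) * F z) := by
  rw [gaussVec_eq_withDensity d hσ] at hF
  exact (integrable_comp_add_left_withDensity_ofReal_iff
    (measurable_gaussVecPDF d σ) (gaussVecPDF_nonneg d σ) c F).mp hF

theorem sum_integral_gaussVec_add {ι : Type*} [Fintype ι] (hσ : σ ≠ 0)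
    (c : ι → EuclideanSpace ℝ (Fin d)) {F : ι → EuclideanSpace ℝ (Fin d) → ℝ}
    (hF : ∀ i, Integrable (fun ε ↦ F i (c i + ε)) (gaussVec d σ)) :
    ∑ i, ∫ ε, F i (c i + ε) ∂gaussVec d σ = ∫ z, ∑ i, gaussVecPDF d σ (z - c i) * F i z := by
  rw [integral_finsetSum _ fun i _ ↦ integrable_gaussVecPDF_sub_mul hσ (hF i)]
  exact Finset.sum_congr rfl fun i _ ↦ integral_gaussVec_add hσ (c i) (F i)

end Shift

theorem multiDeltaDenoiser_minimizes_mse_general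
    (d N : ℕ) (σ : ℝ) (hσ : 0 < σ)
    (y : Fin N → EuclideanSpace ℝ (Fin d))
    (f : EuclideanSpace ℝ (Fin d) → EuclideanSpace ℝ (Fin d))
    (hint : ∀ i, Integrable (fun ε => ‖f (y i + ε) - y i‖ ^ 2) (gaussVec d σ)) :
    (1 / N : ℝ) * ∑ i, ∫ ε, ‖multiDeltaDenoiser y σ (y i + ε) - y i‖ ^ 2 ∂(gaussVec d σ) ≤
      (1 / N : ℝ) * ∑ i, ∫ ε, ‖f (y i + ε) - y i‖ ^ 2 ∂(gaussVec d σ) := by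
  have hD := fun i ↦ integrable_norm_multiDeltaDenoiser_add_sub_sq y σ (gaussVec d σ) (y i)
  refine mul_le_mul_of_nonneg_left ?_ (by positivity)
  rw [sum_integral_gaussVec_add (F := fun i z ↦ ‖multiDeltaDenoiser y σ z - y i‖ ^ 2)
      hσ.ne' y hD,
    sum_integral_gaussVec_add (F := fun i z ↦ ‖f z - y i‖ ^ 2) hσ.ne' y hint]
  exact integral_mono
    (integrable_finsetSum _ fun i _ ↦ integrable_gaussVecPDF_sub_mul hσ.ne' (hD i))
    (integrable_finsetSum _ fun i _ ↦ integrable_gaussVecPDF_sub_mul hσ.ne' (hint i))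
    fun z ↦ sum_gaussVecPDF_mul_norm_multiDeltaDenoiser_sub_sq_le y σ z (f z)

/-- The multi-delta denoiser `D_M` minimizes the expected denoising
mean-squared error over all measurable denoisers, for data uniform on `{y₁, …, y_N}` and
independent Gaussian noise `N(0, σ²I)`. -/
theorem multiDeltaDenoiser_minimizes_mse
    (d N : ℕ) (hN : 0 < N) (σ : ℝ) (hσ : 0 < σ)
    (y : Fin N → EuclideanSpace ℝ (Fin d))
    (f : EuclideanSpace ℝ (Fin d) → EuclideanSpace ℝ (Fin d)) (hf : Measurable f)
    (hint : ∀ i, Integrable (fun ε => ‖f (y i + ε) - y i‖ ^ 2) (gaussVec d σ)) :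
    (1 / N : ℝ) * ∑ i, ∫ ε, ‖multiDeltaDenoiser y σ (y i + ε) - y i‖ ^ 2 ∂(gaussVec d σ) ≤
      (1 / N : ℝ) * ∑ i, ∫ ε, ‖f (y i + ε) - y i‖ ^ 2 ∂(gaussVec d σ) :=
  multiDeltaDenoiser_minimizes_mse_general d N σ hσ y f hint
end
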